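/- arXiv:1711.10442 — 2 statements merged into one kernel-verified Lean document; each statement's English description precedes it below -/
import Mathlib

section
/- Let Γ = HNN(G, H, θ) be a non-ascending HNN extension such that H ∩ θ(H) is finite. If the kernel ker Γ = ⋂_{r∈Γ} rHr⁻¹ is trivial, then both quasi-kernels K₋₁ and K₁ are trivial. -/
namespace HNNStmt

open HNNExtension

variable {G : Type*} [Group G] (A B : Subgroup G) (φ : A ≃* B)

/-- The stable letter `τ` of the paper's convention: `τ⁻¹ h τ = θ(h)` for `h ∈ H = A`,
where `θ = φ`. In Mathlib's `HNNExtension`, `t * of a * t⁻¹ = of (φ a)`, so `τ = t⁻¹`. -/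
def τ : HNNExtension G A B φ := (t : HNNExtension G A B φ)⁻¹

/-- `H₋₁ = H = A` and `H₁ = θ(H) = B`. -/
def Hsub (ε : ℤ) : Subgroup G := if ε = 1 then B else A

/-- The word `g₁ τ^{ε₁} g₂ τ^{ε₂} ⋯ g_n τ^{ε_n} g_{n+1}` (zero-based indexing). -/
def wordProd (gs : ℕ → G) (εs : ℕ → ℤ) (n : ℕ) : HNNExtension G A B φ :=
  ((List.range n).map (fun i => of (gs i) * (τ A B φ) ^ (εs i))).prod * of (gs n)

/-- All exponents are `±1`. -/
def IsSign (εs : ℕ → ℤ) (n : ℕ) : Prop := ∀ i < n, εs i = 1 ∨ εs i = -1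

/-- The word `g₁ τ^{ε₁} ⋯ g_n τ^{ε_n} g_{n+1}` is reduced: whenever `ε_{i+1} = -ε_i`,
the letter `g_{i+1} ∉ H_{ε_i}`. -/
def Reduced (gs : ℕ → G) (εs : ℕ → ℤ) (n : ℕ) : Prop :=
  ∀ i : ℕ, i + 1 < n → εs (i + 1) = -εs i → gs (i + 1) ∉ Hsub A B (εs i)

/-- `T_ε^†`: the set of elements of length `≥ 1`, type `ε`, and initial letter `1`,
described via reduced words: `g` admits a reduced expression with first exponent `ε`
and first letter lying in `H_{-ε}`. -/
def Tdag (ε : ℤ) : Set (HNNExtension G A B φ) :=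
  {g | ∃ (n : ℕ) (gs : ℕ → G) (εs : ℕ → ℤ), 1 ≤ n ∧ IsSign εs n ∧
    Reduced A B gs εs n ∧ g = wordProd A B φ gs εs n ∧ εs 0 = ε ∧ gs 0 ∈ Hsub A B (-ε)}

/-- The quasi-kernel `K_ε = ⋂_{r ∈ Γ \ T_ε^†} r H r⁻¹`. -/
def K (ε : ℤ) : Subgroup (HNNExtension G A B φ) :=
  ⨅ (r : HNNExtension G A B φ) (_ : r ∉ Tdag A B φ ε),
    (A.map (of : G →* HNNExtension G A B φ)).map (MulAut.conj r).toMonoidHom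

end HNNStmt

/-!
Prepending `g τ^{-ε}` to an element outside `T_ε^†` keeps it outside, because the exponents of a
reduced word are determined by its value (Britton's lemma). Hence `s⁻¹ K_ε s ≤ K_ε` for every
`s = g τ^{-ε}`. With `r = 1` this puts `K_ε`, or `τ^{-1} K_ε τ`, inside `H ∩ θ(H)`, so `K_ε` is
finite and these inclusions are equalities: `K_ε` is normalized by `G` and by `τ`, i.e. it is
normal in `Γ`. A normal subgroup contained in `H` lies in its normal core `ker Γ = 1`.
-/

namespace HNNStmt

open HNNExtension HNNExtension.NormalWord

section Sequences

variable {G : Type*}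

def natCons {α : Type*} (x : α) (f : ℕ → α) : ℕ → α
  | 0 => x
  | i + 1 => f i

lemma IsSign.natCons {ε : ℤ} (hε : ε = 1 ∨ ε = -1) {εs : ℕ → ℤ} {n : ℕ} (h : IsSign εs n) :
    IsSign (natCons ε εs) (n + 1) := by
  rintro (_ | i) hi
  · exact hε
  · exact h i (by omega)

/-- `τ ^ e = t ^ tUnit e` for `e = ±1`. -/
def tUnit (e : ℤ) : ℤˣ := if e = 1 then -1 else 1

lemma coe_tUnit {e : ℤ} (he : e = 1 ∨ e = -1) : (tUnit e : ℤ) = -e := by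
  rcases he with rfl | rfl <;> simp [tUnit]

lemma tUnit_neg_coe (u : ℤˣ) : tUnit (-(u : ℤ)) = u := by
  rcases Int.units_eq_one_or u with rfl | rfl <;> simp [tUnit]

lemma tUnit_inj {e e' : ℤ} (he : e = 1 ∨ e = -1) (he' : e' = 1 ∨ e' = -1) :
    tUnit e = tUnit e' ↔ e = e' := by
  rcases he with rfl | rfl <;> rcases he' with rfl | rfl <;> simp [tUnit]

def wordList (gs : ℕ → G) (εs : ℕ → ℤ) (n : ℕ) : List (ℤˣ × G) :=
  (List.range n).map fun i => (tUnit (εs i), gs (i + 1))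

lemma wordList_succ (gs : ℕ → G) (εs : ℕ → ℤ) (n : ℕ) :
    wordList gs εs (n + 1) =
      (tUnit (εs 0), gs 1) :: wordList (gs ∘ Nat.succ) (εs ∘ Nat.succ) n := by
  simp [wordList, List.range_succ_eq_map, List.map_map, Function.comp_def]

lemma exists_wordList_eq (g : G) (l : List (ℤˣ × G)) :
    ∃ (gs : ℕ → G) (εs : ℕ → ℤ), IsSign εs l.length ∧ gs 0 = g ∧ wordList gs εs l.length = l := by
  induction l generalizing g with
  | nil => exact ⟨fun _ => g, fun _ => 1, by simp [IsSign], rfl, rfl⟩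
  | cons a l ih =>
    obtain ⟨gs, εs, hsign, hg, hl⟩ := ih a.2
    refine ⟨natCons g gs, natCons (-(a.1 : ℤ)) εs, ?_, rfl, ?_⟩
    · exact hsign.natCons (by rcases Int.units_eq_one_or a.1 with h | h <;> simp [h])
    · rw [List.length_cons, wordList_succ]
      exact congr_arg₂ _ (Prod.ext (tUnit_neg_coe _) hg) hl

end Sequences

variable {G : Type*} [Group G] {A B : Subgroup G} {φ : A ≃* B}

lemma wordProd_zero (gs : ℕ → G) (εs : ℕ → ℤ) :
    wordProd A B φ gs εs 0 = of (gs 0) := by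
  simp [wordProd]

lemma wordProd_succ (gs : ℕ → G) (εs : ℕ → ℤ) (n : ℕ) :
    wordProd A B φ gs εs (n + 1) =
      of (gs 0) * τ A B φ ^ εs 0 * wordProd A B φ (gs ∘ Nat.succ) (εs ∘ Nat.succ) n := by
  simp only [wordProd, List.range_succ_eq_map, List.map_cons, List.map_map, List.prod_cons,
    mul_assoc, Function.comp_def]

lemma τ_zpow (e : ℤ) : τ A B φ ^ e = (t : HNNExtension G A B φ) ^ (-e) := by
  simp [τ, zpow_neg]

variable (A B) in
lemma toSubgroup_tUnit (e : ℤ) : toSubgroup A B (tUnit e) = Hsub A B e := by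
  by_cases h : e = 1 <;> simp [tUnit, Hsub, h, toSubgroup]

lemma isChain_wordList_iff {gs : ℕ → G} {εs : ℕ → ℤ} {n : ℕ} (hsign : IsSign εs n) :
    (wordList gs εs n).IsChain (fun a b => a.2 ∈ toSubgroup A B a.1 → a.1 = b.1) ↔
      Reduced A B gs εs n := by
  rcases n with _ | n
  · simp [Reduced, wordList]
  rw [wordList, List.isChain_map, List.isChain_range_succ]
  refine forall_congr' fun i => ?_
  rw [Nat.add_lt_add_iff_right]
  refine imp_congr_right fun hi => ?_
  dsimp only
  rw [toSubgroup_tUnit, tUnit_inj (hsign i (by omega)) (hsign (i + 1) (by omega)),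
    ← not_imp_not]
  refine imp_congr_left ?_
  rcases hsign i (by omega) with h | h <;> rcases hsign (i + 1) (by omega) with h' | h' <;>
    simp [h, h']

lemma of_mul_prod_wordList (gs : ℕ → G) (εs : ℕ → ℤ) {n : ℕ} (hsign : IsSign εs n) :
    of (gs 0) * ((wordList gs εs n).map
      fun x => (t : HNNExtension G A B φ) ^ (x.1 : ℤ) * of x.2).prod = wordProd A B φ gs εs n := by
  induction n generalizing gs εs with
  | zero => simp [wordProd_zero, wordList]
  | succ n ih =>
    rw [wordList_succ, wordProd_succ, List.map_cons, List.prod_cons,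
      ← ih (gs ∘ Nat.succ) (εs ∘ Nat.succ) fun i hi => hsign (i + 1) (by omega),
      coe_tUnit (hsign 0 (by omega)), ← τ_zpow]
    simp [mul_assoc, Function.comp_def]

variable (A B) in
def toReducedWord {gs : ℕ → G} {εs : ℕ → ℤ} {n : ℕ} (hsign : IsSign εs n)
    (hred : Reduced A B gs εs n) : ReducedWord G A B :=
  ⟨gs 0, wordList gs εs n, (isChain_wordList_iff hsign).2 hred⟩

lemma prod_toReducedWord {gs : ℕ → G} {εs : ℕ → ℤ} {n : ℕ} (hsign : IsSign εs n)
    (hred : Reduced A B gs εs n) :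
    (toReducedWord A B hsign hred).prod φ = wordProd A B φ gs εs n :=
  of_mul_prod_wordList gs εs hsign

lemma exists_reduced_wordProd_eq (x : HNNExtension G A B φ) :
    ∃ (n : ℕ) (gs : ℕ → G) (εs : ℕ → ℤ),
      IsSign εs n ∧ Reduced A B gs εs n ∧ x = wordProd A B φ gs εs n := by
  obtain ⟨d⟩ := TransversalPair.nonempty G A B
  set w : NormalWord d := x • NormalWord.empty
  obtain ⟨gs, εs, hsign, hg, hl⟩ := exists_wordList_eq w.head w.toList
  refine ⟨_, gs, εs, hsign, (isChain_wordList_iff hsign).1 (by rw [hl]; exact w.chain), ?_⟩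
  have hw : w.prod φ = x := by simp [w]
  rw [← of_mul_prod_wordList gs εs hsign, hl, hg, ← hw]
  rfl

/-- Britton's lemma. -/
lemma exponents_eq_of_wordProd_eq {gs gs' : ℕ → G} {εs εs' : ℕ → ℤ} {n n' : ℕ}
    (hsign : IsSign εs n) (hred : Reduced A B gs εs n)
    (hsign' : IsSign εs' n') (hred' : Reduced A B gs' εs' n')
    (h : wordProd A B φ gs εs n = wordProd A B φ gs' εs' n') :
    n = n' ∧ ∀ i < n, εs i = εs' i := by
  rw [← prod_toReducedWord hsign hred, ← prod_toReducedWord hsign' hred'] at h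
  have hfst := (ReducedWord.map_fst_eq_and_of_prod_eq φ h).1
  have hlen : n = n' := by simpa [toReducedWord, wordList] using congr_arg List.length hfst
  subst hlen
  refine ⟨rfl, fun i hi => (tUnit_inj (hsign i hi) (hsign' i hi)).1 ?_⟩
  simpa [toReducedWord, wordList, hi] using congr_arg (·[i]?) hfst

lemma one_notMem_Tdag (ε : ℤ) : (1 : HNNExtension G A B φ) ∉ Tdag A B φ ε := by
  rintro ⟨n, gs, εs, hn, hsign, hred, h, -⟩
  have hempty : (1 : HNNExtension G A B φ) = wordProd A B φ (fun _ => 1) (fun _ => 1) 0 := by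
    simp [wordProd_zero]
  rw [hempty] at h
  have := (exponents_eq_of_wordProd_eq (n := 0) (fun _ h => absurd h (by omega))
    (fun _ h => absurd h (by omega)) hsign hred h).1
  omega

/-- Prepending `g τ^{-ε}` to a reduced word yields a reduced word of type `-ε`, unless it starts
with `h τ^{ε}`, `h ∈ H_{-ε}`. -/
lemma of_mul_τ_zpow_mul_notMem_Tdag {ε : ℤ} (hε : ε = 1 ∨ ε = -1) (g : G)
    {r : HNNExtension G A B φ} (hr : r ∉ Tdag A B φ ε) :
    of g * τ A B φ ^ (-ε) * r ∉ Tdag A B φ ε := by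
  obtain ⟨n, gs, εs, hsign, hred, rfl⟩ := exists_reduced_wordProd_eq r
  have hsign' : IsSign (natCons (-ε) εs) (n + 1) :=
    hsign.natCons (by rcases hε with rfl | rfl <;> simp)
  have hred' : Reduced A B (natCons g gs) (natCons (-ε) εs) (n + 1) := by
    rintro (_ | i) hi hflip
    · rw [natCons, natCons, neg_neg] at hflip
      exact fun hmem => hr ⟨n, gs, εs, by omega, hsign, hred, rfl, hflip, hmem⟩
    · exact hred i (by omega) hflip
  have hprepend : of g * τ A B φ ^ (-ε) * wordProd A B φ gs εs n =
      wordProd A B φ (natCons g gs) (natCons (-ε) εs) (n + 1) := by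
    rw [wordProd_succ]
    rfl
  rw [hprepend]
  rintro ⟨m, hs, δs, hm, hsignW, hredW, hW, hδ, -⟩
  have := (exponents_eq_of_wordProd_eq hsign' hred' hsignW hredW hW).2 0 (by omega)
  rw [natCons, hδ] at this
  rcases hε with rfl | rfl <;> omega

lemma mem_K_iff {ε : ℤ} {x : HNNExtension G A B φ} :
    x ∈ K A B φ ε ↔ ∀ r ∉ Tdag A B φ ε, r⁻¹ * x * r ∈ A.map of := by
  simp only [K, Subgroup.mem_iInf]
  refine forall₂_congr fun r _ => ?_
  rw [Subgroup.mem_map_equiv, MulAut.conj_symm_apply]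

lemma K_le_map_of (ε : ℤ) : K A B φ ε ≤ A.map of := fun x hx => by
  simpa using mem_K_iff.1 hx 1 (one_notMem_Tdag ε)

lemma conj_mem_K {ε : ℤ} (hε : ε = 1 ∨ ε = -1) (g : G) {x : HNNExtension G A B φ}
    (hx : x ∈ K A B φ ε) :
    (of g * τ A B φ ^ (-ε))⁻¹ * x * (of g * τ A B φ ^ (-ε)) ∈ K A B φ ε := by
  refine mem_K_iff.2 fun r hr => ?_
  simpa [mul_assoc] using mem_K_iff.1 hx _ (of_mul_τ_zpow_mul_notMem_Tdag hε g hr)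

lemma t_mul_mul_t_inv_mem_map_of {x : HNNExtension G A B φ} (hx : x ∈ A.map of) :
    t * x * t⁻¹ ∈ B.map of := by
  obtain ⟨a, ha, rfl⟩ := hx
  exact ⟨_, (φ ⟨a, ha⟩).2, equiv_eq_conj _⟩

/-- `K_ε` lies in `H ∩ θ(H)` for `ε = 1`, and its conjugate `τ⁻¹ K_ε τ` does for `ε = -1`. -/
lemma finite_K {ε : ℤ} (hε : ε = 1 ∨ ε = -1) (hfin : ((A ⊓ B : Subgroup G) : Set G).Finite) :
    (K A B φ ε : Set (HNNExtension G A B φ)).Finite := by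
  have hAB : ((A.map of ⊓ B.map of : Subgroup (HNNExtension G A B φ)) :
      Set (HNNExtension G A B φ)).Finite := by
    rw [← Subgroup.map_inf_eq _ _ _ (of_injective φ), Subgroup.coe_map]
    exact hfin.image _
  rcases hε with rfl | rfl
  · refine hAB.subset fun x hx => ⟨K_le_map_of 1 hx, ?_⟩
    have hconj := K_le_map_of 1 (conj_mem_K (Or.inl rfl) 1 hx)
    simp only [map_one, one_mul, τ, inv_zpow', neg_neg, zpow_one] at hconj
    simpa [mul_assoc] using t_mul_mul_t_inv_mem_map_of hconj
  · refine (hAB.preimage (MulAut.conj t).injective.injOn).subset fun x hx =>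
      ⟨?_, t_mul_mul_t_inv_mem_map_of (K_le_map_of _ hx)⟩
    have hconj := K_le_map_of (-1) (conj_mem_K (Or.inr rfl) 1 hx)
    simpa [τ] using hconj

lemma K_normal {ε : ℤ} (hε : ε = 1 ∨ ε = -1) (hfin : ((A ⊓ B : Subgroup G) : Set G).Finite) :
    (K A B φ ε).Normal := by
  have : Finite (K A B φ ε : Set (HNNExtension G A B φ)) := (finite_K hε hfin).to_subtype
  set N := Subgroup.normalizer (K A B φ ε : Set (HNNExtension G A B φ))
  have hconj (g : G) : (of g * τ A B φ ^ (-ε))⁻¹ ∈ N :=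
    Subgroup.mem_normalizer_fintype fun x hx => by simpa using conj_mem_K hε g hx
  have hτ : τ A B φ ^ ε ∈ N := by simpa using hconj 1
  have ht : t ∈ N := by rcases hε with rfl | rfl <;> simpa [τ] using hτ
  have hof (g : G) : of g ∈ N := by simpa using mul_mem (inv_mem (hconj g)) hτ
  rw [← Subgroup.normalizer_eq_top_iff, Subgroup.eq_top_iff']
  intro x
  induction x using HNNExtension.induction_on with
  | of g => exact hof g
  | t => exact ht
  | mul x y hx hy => exact mul_mem hx hy
  | inv x hx => exact inv_mem hx

lemma K_eq_bot {ε : ℤ} (hε : ε = 1 ∨ ε = -1) (hfin : ((A ⊓ B : Subgroup G) : Set G).Finite)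
    (hcore : (A.map (of : G →* HNNExtension G A B φ)).normalCore = ⊥) :
    K A B φ ε = ⊥ := by
  have := K_normal (φ := φ) hε hfin
  rw [eq_bot_iff, ← hcore]
  exact Subgroup.normal_le_normalCore.2 (K_le_map_of ε)

end HNNStmt

open HNNExtension HNNStmt

theorem stmt_14_general {G : Type*} [Group G] (A B : Subgroup G) (φ : A ≃* B)
    (hfin : ((A ⊓ B : Subgroup G) : Set G).Finite)
    (hker : (⨅ r : HNNExtension G A B φ,
        (A.map (of : G →* HNNExtension G A B φ)).map (MulAut.conj r).toMonoidHom) = ⊥) :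
    K A B φ (-1) = ⊥ ∧ K A B φ 1 = ⊥ := by
  have hcore : (A.map (of : G →* HNNExtension G A B φ)).normalCore = ⊥ := by
    rw [Subgroup.normalCore_eq_iInf_map_conj]
    exact hker
  exact ⟨K_eq_bot (Or.inr rfl) hfin hcore, K_eq_bot (Or.inl rfl) hfin hcore⟩

/-- Let `Γ = HNN(G, H, θ)` be a non-ascending HNN extension with
`H ∩ θ(H)` finite. If the kernel `ker Γ = ⋂_{r ∈ Γ} rHr⁻¹` is trivial, then both
quasi-kernels `K₋₁` and `K₁` are trivial. -/
theorem stmt_14 {G : Type*} [Group G] (A B : Subgroup G) (φ : A ≃* B)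
    (hA : A ≠ ⊤) (hB : B ≠ ⊤)
    (hfin : ((A ⊓ B : Subgroup G) : Set G).Finite)
    (hker : (⨅ r : HNNExtension G A B φ,
        (A.map (of : G →* HNNExtension G A B φ)).map (MulAut.conj r).toMonoidHom) = ⊥) :
    K A B φ (-1) = ⊥ ∧ K A B φ 1 = ⊥ :=
  stmt_14_general A B φ hfin hker
end

section
/- Let T be a tree with extended space X = T ∪ ∂T in the shadow topology, and suppose a group Γ acts on T by automorphisms with minimal, strongly hyperbolic action (so ∂T‾ is a Γ-boundary). If an edge e of T and g ∈ Γ are such that g fixes Z_B(e) pointwise, then g fixes the entire extended shadow Z(e) pointwise. Consequently the fixator subgroups of Z_0(e), Z_B(e), and Z(e) ∩ ∂T‾ coincide. -/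
namespace TreeStmt

variable {V : Type*} (G : SimpleGraph V)

/-- A ray in a graph: a sequence of vertices with `d(r_i, r_{i+n}) = n`. -/
def IsRay (r : ℕ → V) : Prop := ∀ i n : ℕ, G.dist (r i) (r (i + n)) = n

/-- Two rays are cofinal if they eventually agree after shifts. -/
def Cofinal (r s : ℕ → V) : Prop := ∃ k n : ℕ, ∀ i : ℕ, r (i + k) = s (i + n)

/-- A ray passes through the (oriented) edge `(u, v)`. -/
def Through (r : ℕ → V) (u v : V) : Prop := ∃ j : ℕ, r j = u ∧ r (j + 1) = v

/-- The cofinality class of the ray `r` belongs to the boundary shadow `Z_B(u,v)`: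
some ray cofinal to `r` passes through the edge `(u, v)`. -/
def InZB (r : ℕ → V) (u v : V) : Prop :=
  ∃ s : ℕ → V, IsRay G s ∧ Cofinal r s ∧ Through s u v

/-- The shadow of an edge `(u, v)`: vertices strictly closer to `v` than to `u`. -/
def Z0 (u v : V) : Set V := {w : V | G.dist w v < G.dist w u}


/-- The boundary `∂T`: cofinality classes of rays. -/
def Boundary : Type _ := Quot (fun r s : {r : ℕ → V // IsRay G r} => Cofinal r.1 s.1)

/-- The boundary shadow `Z_B(u,v)` as a subset of `∂T`. -/
def ZB (u v : V) : Set (Boundary G) :=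
  {x : Boundary G | ∃ r : {r : ℕ → V // IsRay G r}, x = Quot.mk _ r ∧ InZB G r.1 u v}

/-- The extended space `T ∪ ∂T`. -/
def Ext : Type _ := V ⊕ Boundary G

/-- The extended shadow `Z(u,v) = Z_0(u,v) ∪ Z_B(u,v)` inside `T ∪ ∂T`. -/
def Z (u v : V) : Set (Ext G) :=
  Sum.inl '' Z0 G u v ∪ Sum.inr '' ZB G u v

/-- The shadow topology on `T ∪ ∂T`, generated by the extended shadows. -/
def shadowTopology : TopologicalSpace (Ext G) :=
  TopologicalSpace.generateFrom {S : Set (Ext G) | ∃ u v : V, G.Adj u v ∧ S = Z G u v}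

variable {Γ : Type*} [Group Γ] [MulAction Γ V]

/-- A distance-preserving group action on the vertices maps rays to rays. -/
def rayAct (hd : ∀ (g : Γ) (u v : V), G.dist (g • u) (g • v) = G.dist u v)
    (g : Γ) (r : {r : ℕ → V // IsRay G r}) : {r : ℕ → V // IsRay G r} :=
  ⟨fun i => g • r.1 i, fun i n => (hd g _ _).trans (r.2 i n)⟩

/-- The induced action of `g` on the boundary `∂T`. -/
def bAct (hd : ∀ (g : Γ) (u v : V), G.dist (g • u) (g • v) = G.dist u v)
    (g : Γ) : Boundary G → Boundary G :=
  Quot.map (rayAct G hd g) (by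
    rintro r s ⟨k, n, hkn⟩
    exact ⟨k, n, fun i => congrArg (fun y => g • y) (hkn i)⟩)

/-- The induced action of `g` on the extended space `T ∪ ∂T`. -/
def extAct (hd : ∀ (g : Γ) (u v : V), G.dist (g • u) (g • v) = G.dist u v)
    (g : Γ) : Ext G → Ext G :=
  Sum.map (fun v => g • v) (bAct G hd g)

/-- `g` is a hyperbolic automorphism: it fixes no vertex and inverts no edge. -/
def Hyperbolic (g : Γ) : Prop :=
  (∀ v : V, g • v ≠ v) ∧ ∀ u v : V, G.Adj u v → ¬(g • u = v ∧ g • v = u)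

end TreeStmt

open TreeStmt

/-!
Minimality and a hyperbolic element exclude leaves; general type excludes the tree being a line,
since every hyperbolic isometry of a line is a translation and fixes both of its ends. Minimality
then puts every vertex between two branch vertices, so every ray meets branch vertices arbitrarily
far out.

Let `γ` fix every end of `Z_B(u, v)`. For each ray `r` from `u` through `v` there are `k, n` with
`γ • r (i + k) = r (i + n)`. Two such rays that diverge after a common prefix have opposite shifts
`n - k`, because `γ` preserves the distance between their tails; branching off `r` at two branch
vertices gives three pairwise diverging rays, so the shift of `r` is zero and `γ` fixes a tail of
`r`. Finally, if `γ` fixes `r (j + 1)` but moves `r j`, then `γ • r j` starts a new ray through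
`r (j + 1)` whose fixed tail is two steps closer to `γ • r j` than to `r j`, which is absurd. Hence
`γ` fixes `Z_0(u, v)`; the converse and the statements about fixators are formal.
-/

lemma Int.eq_add_or_eq_sub_of_natAbs_sub_eq {φ : ℤ → ℤ}
    (h : ∀ k l, (φ k - φ l).natAbs = (k - l).natAbs) :
    (∀ k, φ k = φ 0 + k) ∨ ∀ k, φ k = φ 0 - k := by
  have h₁ := h 1 0
  rcases (by omega : φ 1 = φ 0 + 1 ∨ φ 1 = φ 0 - 1) with e | e
  · exact Or.inl fun k => by have := h k 0; have := h k 1; omega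
  · exact Or.inr fun k => by have := h k 0; have := h k 1; omega

namespace SimpleGraph

variable {V : Type*} {G : SimpleGraph V} {x y : V}

lemma Connected.exists_adj_dist_add_one_eq (hc : G.Connected) (h : x ≠ y) :
    ∃ z, G.Adj x z ∧ G.dist z y + 1 = G.dist x y := by
  obtain ⟨p, hp⟩ := hc.exists_walk_length_eq_dist x y
  cases p with
  | nil => exact absurd rfl h
  | @cons _ z _ hxz q =>
    have hq := dist_le q
    have htri : G.dist x y ≤ G.dist x z + G.dist z y := hc.dist_triangle
    rw [dist_eq_one_iff_adj.mpr hxz] at htri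
    rw [Walk.length_cons] at hp
    exact ⟨z, hxz, by omega⟩

lemma IsTree.eq_of_adj_of_dist_add_one_eq (hT : G.IsTree) (x : V) {y z₁ z₂ : V}
    (h₁ : G.Adj z₁ y) (h₂ : G.Adj z₂ y)
    (hd₁ : G.dist x z₁ + 1 = G.dist x y) (hd₂ : G.dist x z₂ + 1 = G.dist x y) : z₁ = z₂ := by
  classical
  have path_via : ∀ {z} (h : G.Adj z y), G.dist x z + 1 = G.dist x y →
      ∃ p : G.Walk x z, (p.concat h).IsPath := by
    intro z h hd
    obtain ⟨p, hp, hlen⟩ := hT.connected.exists_path_of_dist x z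
    refine ⟨p, hp.concat (fun hy => ?_) h⟩
    have := (dist_le (p.takeUntil y hy)).trans (p.length_takeUntil_le_length hy)
    omega
  obtain ⟨p₁, hp₁⟩ := path_via h₁ hd₁
  obtain ⟨p₂, hp₂⟩ := path_via h₂ hd₂
  have := congrArg (fun q : G.Path x y => q.1.penultimate)
    ((hT.isAcyclic.subsingleton_path x y).elim ⟨_, hp₁⟩ ⟨_, hp₂⟩)
  simpa [Walk.penultimate_concat] using this

lemma IsTree.dist_eq_add_one_of_adj_of_ne (hT : G.IsTree) (x : V) {y z p : V}
    (hz : G.Adj y z) (hp : G.Adj p y) (hzp : z ≠ p) (hpd : G.dist x p + 1 = G.dist x y) :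
    G.dist x z = G.dist x y + 1 := by
  refine (hT.dist_eq_dist_add_one_of_adj x hz).resolve_left fun h => hzp ?_
  exact hT.eq_of_adj_of_dist_add_one_eq x hz.symm hp h.symm hpd

lemma Connected.reachable_induce_of_between (hc : G.Connected) {S : Set V} {x y : V}
    (hx : x ∈ S) (hy : y ∈ S) (h : ∀ p, G.dist x p + G.dist p y = G.dist x y → p ∈ S) :
    (G.induce S).Reachable ⟨x, hx⟩ ⟨y, hy⟩ := by
  induction hn : G.dist x y generalizing x with
  | zero =>
    obtain rfl := hc.dist_eq_zero_iff.mp hn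
    rfl
  | succ n ih =>
    obtain ⟨z, hxz, hz⟩ := hc.exists_adj_dist_add_one_eq (x := x) (y := y) (by
      rintro rfl; simp at hn)
    have hxz1 : G.dist x z = 1 := dist_eq_one_iff_adj.mpr hxz
    have hzS : z ∈ S := h z (by omega)
    refine (show (G.induce S).Adj ⟨x, hx⟩ ⟨z, hzS⟩ from hxz).reachable.trans
      (ih hzS (fun p hp => h p ?_) (by omega))
    have : G.dist x p ≤ G.dist x z + G.dist z p := hc.dist_triangle
    have : G.dist x y ≤ G.dist x p + G.dist p y := hc.dist_triangle
    omega

lemma Connected.eq_univ_of_adj_mem (hc : G.Connected) {S : Set V} (hS : S.Nonempty)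
    (h : ∀ x ∈ S, ∀ y, G.Adj x y → y ∈ S) : S = Set.univ := by
  obtain ⟨x, hx⟩ := hS
  refine Set.eq_univ_of_forall fun y => ?_
  obtain ⟨p⟩ := hc x y
  induction p with
  | nil => exact hx
  | cons hadj _ ih => exact ih (h _ hx _ hadj)

lemma Connected.eq_or_eq_of_subsingleton_adj (hc : G.Connected)
    (h : ∀ x z₁ z₂, G.Adj x z₁ → G.Adj x z₂ → z₁ = z₂) {u v : V} (he : G.Adj u v) (x : V) :
    x = u ∨ x = v := by
  refine or_iff_not_imp_left.mpr fun hxu => ?_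
  obtain ⟨z, hxz, hz⟩ := hc.exists_adj_dist_add_one_eq hxu
  by_cases hzu : z = u
  · exact h u x v (hzu ▸ hxz.symm) he
  · obtain ⟨z', hzz', hz'⟩ := hc.exists_adj_dist_add_one_eq hzu
    obtain rfl := h z x z' hxz.symm hzz'
    omega

lemma IsTree.exists_adj_dist_eq_add_one (hT : G.IsTree)
    (h2 : ∀ y, ∃ z₁ z₂, z₁ ≠ z₂ ∧ G.Adj y z₁ ∧ G.Adj y z₂) (x y : V) :
    ∃ z, G.Adj y z ∧ G.dist x z = G.dist x y + 1 := by
  obtain ⟨z₁, z₂, hne, h₁, h₂⟩ := h2 y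
  by_cases hyx : y = x
  · subst hyx
    exact ⟨z₁, h₁, by simp [h₁]⟩
  obtain ⟨p, hp, hpd⟩ := hT.connected.exists_adj_dist_add_one_eq hyx
  obtain ⟨z, hz, hzp⟩ : ∃ z, G.Adj y z ∧ z ≠ p := by
    by_cases h : z₁ = p
    exacts [⟨z₂, h₂, h ▸ hne.symm⟩, ⟨z₁, h₁, h⟩]
  refine ⟨z, hz, hT.dist_eq_add_one_of_adj_of_ne x hz hp.symm hzp ?_⟩
  rwa [SimpleGraph.dist_comm, SimpleGraph.dist_comm (u := x)]

end SimpleGraph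

namespace TreeStmt

open SimpleGraph

variable {V : Type*} {G : SimpleGraph V}

lemma cofinal_refl (r : ℕ → V) : Cofinal r r := ⟨0, 0, fun _ => rfl⟩

lemma Cofinal.symm {r s : ℕ → V} (h : Cofinal r s) : Cofinal s r := by
  obtain ⟨k, n, h⟩ := h
  exact ⟨n, k, fun i => (h i).symm⟩

lemma Cofinal.trans {r s t : ℕ → V} (h₁ : Cofinal r s) (h₂ : Cofinal s t) : Cofinal r t := by
  obtain ⟨k, n, h₁⟩ := h₁
  obtain ⟨k', n', h₂⟩ := h₂
  refine ⟨k + k', n + n', fun i => ?_⟩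
  calc r (i + (k + k')) = s (i + k' + n) := by rw [← h₁]; ring_nf
    _ = t (i + (n + n')) := by rw [show i + k' + n = i + n + k' by omega, h₂]; ring_nf

lemma boundary_mk_eq_iff {r s : {r : ℕ → V // IsRay G r}} :
    (Quot.mk _ r : Boundary G) = Quot.mk _ s ↔ Cofinal r.1 s.1 :=
  Equivalence.quot_mk_eq_iff (r := fun r s : {r : ℕ → V // IsRay G r} => Cofinal r.1 s.1)
    ⟨fun r => cofinal_refl r.1, Cofinal.symm, Cofinal.trans⟩ r s

lemma Cofinal.map {r s : ℕ → V} (f : V → V) (h : Cofinal r s) :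
    Cofinal (fun i => f (r i)) (fun i => f (s i)) := by
  obtain ⟨k, n, h⟩ := h
  exact ⟨k, n, fun i => congrArg f (h i)⟩

section Rays

variable {r : ℕ → V}

lemma IsRay.dist_zero (hr : IsRay G r) (i : ℕ) : G.dist (r 0) (r i) = i := by
  simpa using hr 0 i

lemma IsRay.adj (hr : IsRay G r) (i : ℕ) : G.Adj (r i) (r (i + 1)) :=
  dist_eq_one_iff_adj.mp (hr i 1)

lemma IsRay.injective (hr : IsRay G r) : Function.Injective r := by
  have key : ∀ i j, i < j → r i ≠ r j := fun i j hij h => by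
    have := hr i (j - i)
    rw [show i + (j - i) = j by omega, h, dist_self] at this
    omega
  intro i j h
  by_contra hne
  rcases Nat.lt_or_gt_of_ne hne with hij | hij
  exacts [key i j hij h, key j i hij h.symm]

lemma isRay_of_dist_of_adj (hc : G.Connected) (hd : ∀ i, G.dist (r 0) (r i) = i)
    (hadj : ∀ i, G.Adj (r i) (r (i + 1))) : IsRay G r := by
  intro i n
  have hle : G.dist (r i) (r (i + n)) ≤ n := by
    induction n with
    | zero => simp
    | succ n ih =>
      have := hc.dist_triangle (u := r i) (v := r (i + n)) (w := r (i + n + 1))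
      rw [dist_eq_one_iff_adj.mpr (hadj _)] at this
      rw [← add_assoc]
      omega
  have : G.dist (r 0) (r (i + n)) ≤ G.dist (r 0) (r i) + G.dist (r i) (r (i + n)) :=
    hc.dist_triangle
  rw [hd, hd] at this
  omega

lemma IsRay.dist_add_of_eqOn_of_ne (hT : G.IsTree) {r' : ℕ → V} (hr : IsRay G r)
    (hr' : IsRay G r') {m : ℕ} (hag : ∀ i ≤ m, r i = r' i) (hdiv : r (m + 1) ≠ r' (m + 1))
    (p q : ℕ) : G.dist (r (m + p)) (r' (m + q)) = p + q := by
  have base : G.dist (r (m + p)) (r' m) = p := by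
    rw [← hag m le_rfl, dist_comm, hr m p]
  suffices h : ∀ q, G.dist (r (m + p)) (r' (m + q)) = p + q ∧
      G.dist (r (m + p)) (r' (m + q + 1)) = p + q + 1 from (h q).1
  intro q
  induction q with
  | zero =>
    refine ⟨base, ?_⟩
    rcases p with _ | p
    · simpa [hag m le_rfl] using hr' m 1
    · have hpar : G.Adj (r (m + 1)) (r' m) := hag m le_rfl ▸ (hr.adj m).symm
      rw [hT.dist_eq_add_one_of_adj_of_ne _ (hr'.adj m) hpar (Ne.symm hdiv)
        (by rw [base, dist_comm, show m + (p + 1) = m + 1 + p by ring, hr (m + 1) p])]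
      simp only [base, add_zero]
  | succ q ih =>
    refine ⟨ih.2, ?_⟩
    have hne : r' (m + q + 1 + 1) ≠ r' (m + q) := fun h => by
      have := hr'.injective h
      omega
    rw [show m + (q + 1) + 1 = m + q + 1 + 1 by ring,
      hT.dist_eq_add_one_of_adj_of_ne _ (hr'.adj (m + q + 1)) (hr'.adj (m + q)) hne
        (by rw [ih.1, ih.2]), ih.2]
    ring

lemma IsRay.dist_eq_natAbs (hr : IsRay G r) (i j : ℕ) :
    G.dist (r i) (r j) = ((i : ℤ) - j).natAbs := by
  rcases le_total i j with h | h
  · rw [← Nat.add_sub_cancel' h, hr]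
    omega
  · rw [dist_comm, ← Nat.add_sub_cancel' h, hr]
    omega

variable (hext : ∀ x y : V, ∃ z, G.Adj y z ∧ G.dist x z = G.dist x y + 1)
include hext

lemma exists_isRay_extend (hc : G.Connected) (f : ℕ → V) (a : ℕ)
    (hd : ∀ i ≤ a, G.dist (f 0) (f i) = i) (hadj : ∀ i < a, G.Adj (f i) (f (i + 1))) :
    ∃ r, IsRay G r ∧ ∀ i ≤ a, r i = f i := by
  choose next hnext_adj hnext_dist using hext (f 0)
  have hiter : ∀ n, G.dist (f 0) (next^[n] (f a)) = a + n := by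
    intro n
    induction n with
    | zero => exact hd a le_rfl
    | succ n ih => rw [Function.iterate_succ_apply', hnext_dist, ih, add_assoc]
  let r : ℕ → V := fun i => if i ≤ a then f i else next^[i - a] (f a)
  have hr_of_le : ∀ i, a ≤ i → r i = next^[i - a] (f a) := by
    intro i hi
    rcases hi.eq_or_lt with rfl | hi
    · simp [r]
    · simp [r, hi.not_ge]
  have hr0 : r 0 = f 0 := by simp [r]
  refine ⟨r, isRay_of_dist_of_adj hc (fun i => ?_) (fun i => ?_), fun i hi => by simp [r, hi]⟩
  · rcases le_or_gt i a with hi | hi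
    · simpa [r, hi] using hd i hi
    · rw [hr0, hr_of_le i hi.le, hiter]
      omega
  · rcases lt_or_ge i a with hi | hi
    · simpa [r, hi.le, Nat.succ_le_of_lt hi] using hadj i hi
    · rw [hr_of_le i hi, hr_of_le (i + 1) (by omega), show i + 1 - a = i - a + 1 by omega,
        Function.iterate_succ_apply']
      exact hnext_adj _

lemma exists_isRay_through (hc : G.Connected) (x y : V) :
    ∃ r, IsRay G r ∧ r 0 = x ∧ r (G.dist x y) = y := by
  obtain ⟨p, hp⟩ := hc.exists_walk_length_eq_dist x y
  have hd : ∀ i ≤ G.dist x y, G.dist x (p.getVert i) = i := by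
    intro i hi
    have h₁ := dist_le (p.take i)
    have h₂ := dist_le (p.drop i)
    have h₃ : G.dist x y ≤ G.dist x (p.getVert i) + G.dist (p.getVert i) y := hc.dist_triangle
    simp only [Walk.take_length, Walk.drop_length] at h₁ h₂
    omega
  obtain ⟨r, hr, hrp⟩ := exists_isRay_extend hext hc p.getVert (G.dist x y)
    (by simpa using hd) (fun i hi => p.adj_getVert_succ (hp ▸ hi))
  refine ⟨r, hr, by simpa using hrp 0 (Nat.zero_le _), ?_⟩
  rw [hrp _ le_rfl, ← hp, p.getVert_length]

lemma IsRay.exists_branch_off (hT : G.IsTree) (hr : IsRay G r) {a : ℕ} {z : V}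
    (hz : G.Adj (r (a + 1)) z) (hza : z ≠ r a) :
    ∃ t, IsRay G t ∧ (∀ i ≤ a + 1, t i = r i) ∧ t (a + 2) = z := by
  have hdz : G.dist (r 0) z = a + 2 := by
    rw [hT.dist_eq_add_one_of_adj_of_ne _ hz (hr.adj a) hza (by rw [hr.dist_zero, hr.dist_zero]),
      hr.dist_zero]
  obtain ⟨t, ht, htf⟩ := exists_isRay_extend hext hT.connected
    (fun i => if i ≤ a + 1 then r i else z) (a + 2)
    (fun i hi => by
      rcases Nat.lt_or_ge i (a + 2) with hi' | hi'
      · simpa [show i ≤ a + 1 by omega] using hr.dist_zero i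
      · simpa [show i = a + 2 by omega] using hdz)
    (fun i hi => by
      rcases Nat.lt_or_ge i (a + 1) with hi' | hi'
      · simpa [hi'.le, show i + 1 ≤ a + 1 by omega] using hr.adj i
      · simpa [show i = a + 1 by omega] using hz)
  exact ⟨t, ht, fun i hi => by simp [htf i (by omega), hi], by simp [htf (a + 2) le_rfl]⟩

lemma exists_isRay_of_mem_Z0 (hT : G.IsTree) {u v w : V} (he : G.Adj u v)
    (hw : w ∈ Z0 G u v) : ∃ r, IsRay G r ∧ r 0 = u ∧ r 1 = v ∧ w ∈ Set.range r := by
  obtain ⟨r, hr, h0, hrw⟩ := exists_isRay_through hext hT.connected u w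
  have hwu : G.dist w u = G.dist w v + 1 :=
    (hT.dist_eq_dist_add_one_of_adj w he).resolve_right fun h => by
      have : G.dist w v < G.dist w u := hw
      omega
  refine ⟨r, hr, h0, ?_, _, hrw⟩
  refine hT.eq_of_adj_of_dist_add_one_eq w (h0 ▸ (hr.adj 0).symm) he.symm ?_ hwu.symm
  have := hr 1 (G.dist w v)
  rw [Nat.add_comm, ← hwu, SimpleGraph.dist_comm (u := w), hrw, SimpleGraph.dist_comm] at this
  rw [this, hwu]

end Rays

def IsBranch (G : SimpleGraph V) (x : V) : Prop :=
  ∃ z₁ z₂ z₃ : V, z₁ ≠ z₂ ∧ z₁ ≠ z₃ ∧ z₂ ≠ z₃ ∧ G.Adj x z₁ ∧ G.Adj x z₂ ∧ G.Adj x z₃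

lemma IsBranch.exists_adj_ne_ne {x : V} (hx : IsBranch G x) (y₁ y₂ : V) :
    ∃ z, G.Adj x z ∧ z ≠ y₁ ∧ z ≠ y₂ := by
  obtain ⟨z₁, z₂, z₃, h₁₂, h₁₃, h₂₃, a₁, a₂, a₃⟩ := hx
  by_contra! h
  have e₁ := h z₁ a₁
  have e₂ := h z₂ a₂
  have e₃ := h z₃ a₃
  by_cases z₁ = y₁ <;> by_cases z₂ = y₁ <;> grind

lemma eq_or_eq_of_not_isBranch {x y z₁ z₂ : V} (hx : ¬IsBranch G x) (h₁₂ : z₁ ≠ z₂)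
    (a₁ : G.Adj x z₁) (a₂ : G.Adj x z₂) (hy : G.Adj x y) : y = z₁ ∨ y = z₂ := by
  by_contra! h
  exact hx ⟨z₁, z₂, y, h₁₂, h.1.symm, h.2.symm, a₁, a₂, hy⟩

lemma IsRay.eq_or_eq_of_adj_of_not_isBranch {r : ℕ → V} (hr : IsRay G r) {j : ℕ} {y : V}
    (hx : ¬IsBranch G (r (j + 1))) (hy : G.Adj (r (j + 1)) y) : y = r j ∨ y = r (j + 2) :=
  eq_or_eq_of_not_isBranch hx (fun h => by have := hr.injective h; omega) (hr.adj j).symm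
    (hr.adj (j + 1)) hy

lemma IsRay.exists_isBranch_gt_of_dist_lt (hT : G.IsTree) {r : ℕ → V} (hr : IsRay G r)
    {b : V} (hb : IsBranch G b) {j : ℕ} (hj : G.dist (r (j + 1)) b < G.dist (r j) b) :
    ∃ a, j < a ∧ IsBranch G (r a) := by
  induction hn : G.dist (r j) b using Nat.strong_induction_on generalizing j with
  | _ n ih =>
  by_cases hbr : IsBranch G (r (j + 1))
  · exact ⟨j + 1, by omega, hbr⟩
  have hne : r (j + 1) ≠ b := fun h => hbr (h ▸ hb)
  obtain ⟨p, hp, hpd⟩ := hT.connected.exists_adj_dist_add_one_eq hne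
  rcases hr.eq_or_eq_of_adj_of_not_isBranch hbr hp with rfl | rfl
  · omega
  · obtain ⟨a, ha, hba⟩ :=
      ih _ (hn ▸ hj) (j := j + 1) (show G.dist (r (j + 2)) b < _ by omega) rfl
    exact ⟨a, by omega, hba⟩

lemma IsRay.exists_isBranch_gt (hT : G.IsTree)
    (hbetween : ∀ x, ∃ b₁ b₂, IsBranch G b₁ ∧ IsBranch G b₂ ∧
      G.dist b₁ x + G.dist x b₂ = G.dist b₁ b₂)
    {r : ℕ → V} (hr : IsRay G r) (M : ℕ) : ∃ a, M < a ∧ IsBranch G (r a) := by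
  have hc := hT.connected
  by_cases hbr : IsBranch G (r (M + 1))
  · exact ⟨M + 1, by omega, hbr⟩
  obtain ⟨b₁, b₂, hb₁, hb₂, hx⟩ := hbetween (r (M + 1))
  have hne₁ : r (M + 1) ≠ b₁ := fun h => hbr (h ▸ hb₁)
  have hne₂ : r (M + 1) ≠ b₂ := fun h => hbr (h ▸ hb₂)
  obtain ⟨p₁, hp₁, hd₁⟩ := hc.exists_adj_dist_add_one_eq hne₁
  obtain ⟨p₂, hp₂, hd₂⟩ := hc.exists_adj_dist_add_one_eq hne₂
  have hp₁₂ : p₁ ≠ p₂ := by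
    rintro rfl
    have := hc.dist_triangle (u := b₁) (v := p₁) (w := b₂)
    have : G.dist b₁ p₁ = G.dist p₁ b₁ := SimpleGraph.dist_comm
    have : G.dist b₁ (r (M + 1)) = G.dist (r (M + 1)) b₁ := SimpleGraph.dist_comm
    omega
  have toward : ∀ {p b}, G.Adj (r (M + 1)) p → G.dist p b + 1 = G.dist (r (M + 1)) b →
      p ≠ r M → G.dist (r (M + 2)) b < G.dist (r (M + 1)) b := fun hp hpd hpM => by
    rw [← (hr.eq_or_eq_of_adj_of_not_isBranch hbr hp).resolve_left hpM]
    omega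
  obtain ⟨a, ha, hba⟩ : ∃ a, M + 1 < a ∧ IsBranch G (r a) := by
    by_cases h : p₁ = r M
    · exact hr.exists_isBranch_gt_of_dist_lt hT hb₂ (toward hp₂ hd₂ (h ▸ hp₁₂.symm))
    · exact hr.exists_isBranch_gt_of_dist_lt hT hb₁ (toward hp₁ hd₁ h)
  exact ⟨a, by omega, hba⟩

lemma exists_line (hT : G.IsTree) (h2 : ∀ y, ∃ z₁ z₂, z₁ ≠ z₂ ∧ G.Adj y z₁ ∧ G.Adj y z₂)
    (hnb : ∀ x, ¬IsBranch G x) :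
    ∃ ι : ℤ → V, Function.Surjective ι ∧ ∀ k l, G.dist (ι k) (ι l) = (k - l).natAbs := by
  have hext := hT.exists_adj_dist_eq_add_one h2
  obtain ⟨u⟩ := hT.connected.nonempty
  obtain ⟨w₁, w₂, hw, h₁, h₂⟩ := h2 u
  obtain ⟨r, hr, hr0, hr1⟩ := exists_isRay_through hext hT.connected u w₁
  obtain ⟨r', hr', hr0', hr1'⟩ := exists_isRay_through hext hT.connected u w₂
  rw [dist_eq_one_iff_adj.mpr h₁] at hr1
  rw [dist_eq_one_iff_adj.mpr h₂] at hr1'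
  have hopp : ∀ p q, G.dist (r p) (r' q) = p + q := by
    simpa using hr.dist_add_of_eqOn_of_ne hT hr' (m := 0) (by simp [hr0, hr0'])
      (by simpa [hr1, hr1'] using hw)
  let ι : ℤ → V := fun k => if 0 ≤ k then r k.toNat else r' (-k).toNat
  have hdist : ∀ k l, G.dist (ι k) (ι l) = (k - l).natAbs := by
    intro k l
    simp only [ι]
    split_ifs <;> simp only [hr.dist_eq_natAbs, hr'.dist_eq_natAbs, hopp,
      SimpleGraph.dist_comm (u := r' _) (v := r _)] <;> omega
  have hadj : ∀ k, G.Adj (ι k) (ι (k + 1)) := fun k =>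
    dist_eq_one_iff_adj.mp (by rw [hdist]; omega)
  refine ⟨ι, Set.range_eq_univ.mp (hT.connected.eq_univ_of_adj_mem ⟨ι 0, 0, rfl⟩ ?_), hdist⟩
  rintro _ ⟨k, rfl⟩ y hy
  have hne : ι (k - 1) ≠ ι (k + 1) := fun h => by
    have := hdist (k - 1) (k + 1)
    rw [h, SimpleGraph.dist_self] at this
    omega
  rcases eq_or_eq_of_not_isBranch (hnb _) hne (by simpa using (hadj (k - 1)).symm) (hadj k) hy
    with rfl | rfl
  exacts [⟨_, rfl⟩, ⟨_, rfl⟩]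

section Action

variable {Γ : Type*} [Group Γ] [MulAction Γ V]

lemma adj_smul (hd : ∀ (g : Γ) (u v : V), G.dist (g • u) (g • v) = G.dist u v) (g : Γ)
    {x y : V} (h : G.Adj x y) : G.Adj (g • x) (g • y) := by
  rw [← dist_eq_one_iff_adj, hd, dist_eq_one_iff_adj.mpr h]

lemma IsBranch.smul (hd : ∀ (g : Γ) (u v : V), G.dist (g • u) (g • v) = G.dist u v) (g : Γ)
    {x : V} (hx : IsBranch G x) : IsBranch G (g • x) := by
  obtain ⟨z₁, z₂, z₃, h₁₂, h₁₃, h₂₃, a₁, a₂, a₃⟩ := hx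
  have hinj : Function.Injective (fun x : V => g • x) := MulAction.injective g
  exact ⟨g • z₁, g • z₂, g • z₃, hinj.ne h₁₂, hinj.ne h₁₃, hinj.ne h₂₃,
    adj_smul hd g a₁, adj_smul hd g a₂, adj_smul hd g a₃⟩

lemma Hyperbolic.exists_smul_eq_add {ι : ℤ → V} (hι : Function.Surjective ι)
    (hιd : ∀ k l, G.dist (ι k) (ι l) = (k - l).natAbs)
    (hd : ∀ (g : Γ) (u v : V), G.dist (g • u) (g • v) = G.dist u v) {h : Γ}
    (hh : Hyperbolic G h) : ∃ c, ∀ k, h • ι k = ι (c + k) := by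
  let φ : ℤ → ℤ := fun k => Function.surjInv hι (h • ι k)
  have hφ : ∀ k, ι (φ k) = h • ι k := fun k => Function.surjInv_eq hι _
  rcases Int.eq_add_or_eq_sub_of_natAbs_sub_eq (φ := φ) (fun k l => by
    rw [← hιd, hφ, hφ, hd, hιd]) with htr | hrefl
  · exact ⟨φ 0, fun k => by rw [← hφ, htr]⟩
  · -- a reflection of the line fixes a vertex or inverts an edge
    exfalso
    obtain ⟨t, ht | ht⟩ := Int.even_or_odd' (φ 0)
    · exact hh.1 (ι t) (by rw [← hφ, hrefl, ht]; congr 1; ring)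
    · refine hh.2 (ι t) (ι (t + 1)) (dist_eq_one_iff_adj.mp (by rw [hιd]; omega)) ⟨?_, ?_⟩ <;>
        rw [← hφ, hrefl, ht] <;> congr 1 <;> ring

lemma cofinal_of_smul_eq_add {ι : ℤ → V} {h : Γ} {c : ℤ} (hc : ∀ k, h • ι k = ι (c + k)) :
    Cofinal (fun i : ℕ => h • ι i) (fun i : ℕ => ι i) :=
  ⟨(-c).toNat, c.toNat, fun i => by simp only [hc]; congr 1; push_cast; omega⟩

lemma exists_two_adj (hT : G.IsTree)
    (hd : ∀ (g : Γ) (u v : V), G.dist (g • u) (g • v) = G.dist u v)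
    (hmin : ∀ S : Set V, S.Nonempty → (∀ (g : Γ), ∀ v ∈ S, g • v ∈ S) →
      (G.induce S).Connected → S = Set.univ)
    {u v : V} (he : G.Adj u v) (hg : ∃ g : Γ, Hyperbolic G g) (y : V) :
    ∃ z₁ z₂, z₁ ≠ z₂ ∧ G.Adj y z₁ ∧ G.Adj y z₂ := by
  have hc := hT.connected
  obtain ⟨g, hg⟩ := hg
  let S : Set V := {x | ∃ z₁ z₂, z₁ ≠ z₂ ∧ G.Adj x z₁ ∧ G.Adj x z₂}
  have hne : S.Nonempty := by
    -- otherwise the tree is the single edge `u v`, which `g` would invert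
    by_contra hS
    have hsub : ∀ x z₁ z₂, G.Adj x z₁ → G.Adj x z₂ → z₁ = z₂ := fun x z₁ z₂ h₁ h₂ =>
      by_contra fun h => hS ⟨x, z₁, z₂, h, h₁, h₂⟩
    have hu := hc.eq_or_eq_of_subsingleton_adj hsub he (g • u)
    have hv := hc.eq_or_eq_of_subsingleton_adj hsub he (g • v)
    exact hg.2 u v he ⟨hu.resolve_left (hg.1 u), hv.resolve_right (hg.1 v)⟩
  have hinv : ∀ (g : Γ), ∀ x ∈ S, g • x ∈ S := by
    rintro g x ⟨z₁, z₂, hz, h₁, h₂⟩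
    exact ⟨g • z₁, g • z₂, (MulAction.injective g).ne hz, adj_smul hd g h₁, adj_smul hd g h₂⟩
  have hconn : (G.induce S).Connected := by
    rw [connected_iff]
    refine ⟨fun ⟨x, hx⟩ ⟨y, hy⟩ => hc.reachable_induce_of_between hx hy fun p hp => ?_,
      hne.to_subtype⟩
    by_cases hpx : p = x
    · exact hpx ▸ hx
    by_cases hpy : p = y
    · exact hpy ▸ hy
    obtain ⟨c₁, hc₁, hd₁⟩ := hc.exists_adj_dist_add_one_eq hpx
    obtain ⟨c₂, hc₂, hd₂⟩ := hc.exists_adj_dist_add_one_eq hpy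
    refine ⟨c₁, c₂, ?_, hc₁, hc₂⟩
    rintro rfl
    have := hc.dist_triangle (u := x) (v := c₁) (w := y)
    have : G.dist x c₁ = G.dist c₁ x := SimpleGraph.dist_comm
    have : G.dist x p = G.dist p x := SimpleGraph.dist_comm
    omega
  exact (hmin S hne hinv hconn ▸ Set.mem_univ y : y ∈ S)

lemma exists_isBranch (hT : G.IsTree)
    (hd : ∀ (g : Γ) (u v : V), G.dist (g • u) (g • v) = G.dist u v)
    (h2 : ∀ y, ∃ z₁ z₂, z₁ ≠ z₂ ∧ G.Adj y z₁ ∧ G.Adj y z₂)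
    (hgen : ∃ g₁ g₂ : Γ, Hyperbolic G g₁ ∧ Hyperbolic G g₂ ∧
      ∀ r : ℕ → V, IsRay G r → Cofinal (fun i => g₁ • r i) r →
        ¬ Cofinal (fun i => g₂ • r i) r) :
    ∃ b, IsBranch G b := by
  by_contra! hnb
  obtain ⟨ι, hι, hιd⟩ := exists_line hT h2 hnb
  obtain ⟨g₁, g₂, hg₁, hg₂, htr⟩ := hgen
  obtain ⟨c₁, hc₁⟩ := hg₁.exists_smul_eq_add hι hιd hd
  obtain ⟨c₂, hc₂⟩ := hg₂.exists_smul_eq_add hι hιd hd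
  exact htr (fun i : ℕ => ι i) (fun i n => by rw [hιd]; omega)
    (cofinal_of_smul_eq_add hc₁) (cofinal_of_smul_eq_add hc₂)

lemma exists_isBranch_between (hT : G.IsTree)
    (hd : ∀ (g : Γ) (u v : V), G.dist (g • u) (g • v) = G.dist u v)
    (hmin : ∀ S : Set V, S.Nonempty → (∀ (g : Γ), ∀ v ∈ S, g • v ∈ S) →
      (G.induce S).Connected → S = Set.univ)
    (hb : ∃ b, IsBranch G b) (x : V) :
    ∃ b₁ b₂, IsBranch G b₁ ∧ IsBranch G b₂ ∧ G.dist b₁ x + G.dist x b₂ = G.dist b₁ b₂ := by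
  have hc := hT.connected
  let S : Set V :=
    {x | ∃ b₁ b₂, IsBranch G b₁ ∧ IsBranch G b₂ ∧ G.dist b₁ x + G.dist x b₂ = G.dist b₁ b₂}
  have hbS : ∀ b, IsBranch G b → b ∈ S := fun b hb => ⟨b, b, hb, hb, by simp⟩
  have hreach : ∀ x (hx : x ∈ S), ∃ b, ∃ hb : IsBranch G b,
      (G.induce S).Reachable ⟨x, hx⟩ ⟨b, hbS b hb⟩ := by
    intro x hx
    obtain ⟨b₁, b₂, hb₁, hb₂, hxb⟩ := id hx
    refine ⟨b₁, hb₁, hc.reachable_induce_of_between hx _ fun p hp => ⟨b₁, b₂, hb₁, hb₂, ?_⟩⟩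
    have := hc.dist_triangle (u := p) (v := x) (w := b₂)
    have := hc.dist_triangle (u := b₁) (v := p) (w := b₂)
    have : G.dist b₁ x = G.dist x b₁ := SimpleGraph.dist_comm
    have : G.dist b₁ p = G.dist p b₁ := SimpleGraph.dist_comm
    have : G.dist p x = G.dist x p := SimpleGraph.dist_comm
    omega
  have hconn : (G.induce S).Connected := by
    obtain ⟨b, hb⟩ := hb
    rw [connected_iff]
    refine ⟨fun ⟨x, hx⟩ ⟨y, hy⟩ => ?_, ⟨⟨b, hbS b hb⟩⟩⟩
    obtain ⟨b₁, hb₁, h₁⟩ := hreach x hx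
    obtain ⟨b₂, hb₂, h₂⟩ := hreach y hy
    exact (h₁.trans (hc.reachable_induce_of_between _ _
      fun p hp => ⟨b₁, b₂, hb₁, hb₂, hp⟩)).trans h₂.symm
  have hinv : ∀ (g : Γ), ∀ x ∈ S, g • x ∈ S := by
    rintro g x ⟨b₁, b₂, hb₁, hb₂, hx⟩
    exact ⟨g • b₁, g • b₂, hb₁.smul hd g, hb₂.smul hd g, by rwa [hd, hd, hd]⟩
  exact (hmin S (hb.imp hbS) hinv hconn ▸ Set.mem_univ x : x ∈ S)

section Fixing

variable (hd : ∀ (g : Γ) (u v : V), G.dist (g • u) (g • v) = G.dist u v)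

lemma fixes_Z_iff {u v : V} {γ : Γ} :
    (∀ x ∈ Z G u v, extAct G hd γ x = x) ↔
      (∀ w ∈ Z0 G u v, γ • w = w) ∧ ∀ x ∈ ZB G u v, bAct G hd γ x = x := by
  constructor
  · intro h
    exact ⟨fun w hw => Sum.inl_injective (h _ (Or.inl ⟨w, hw, rfl⟩)),
      fun x hx => Sum.inr_injective (h _ (Or.inr ⟨x, hx, rfl⟩))⟩
  · rintro ⟨h₀, hB⟩ _ (⟨w, hw, rfl⟩ | ⟨x, hx, rfl⟩)
    exacts [congrArg Sum.inl (h₀ w hw), congrArg Sum.inr (hB x hx)]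

lemma fixes_ZB_of_fixes_Z0 {u v : V} {γ : Γ} (h : ∀ w ∈ Z0 G u v, γ • w = w) :
    ∀ x ∈ ZB G u v, bAct G hd γ x = x := by
  rintro _ ⟨r, rfl, s, hs, hrs, j, rfl, rfl⟩
  have htail : ∀ i, γ • s (i + (j + 1)) = s (i + (j + 1)) := fun i => h _ <| by
    have h₁ := hs (j + 1) i
    have h₂ := hs j (i + 1)
    rw [SimpleGraph.dist_comm] at h₁ h₂
    show G.dist _ (s (j + 1)) < G.dist _ (s j)
    rw [show i + (j + 1) = j + (i + 1) by ring, h₂, show j + (i + 1) = j + 1 + i by ring, h₁]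
    omega
  exact boundary_mk_eq_iff.mpr <|
    (hrs.map (γ • ·)).trans (Cofinal.trans (s := s) ⟨j + 1, j + 1, htail⟩ hrs.symm)

lemma cofinal_of_fixes_ZB {u v : V} {γ : Γ} (hfix : ∀ x ∈ ZB G u v, bAct G hd γ x = x)
    {r : ℕ → V} (hr : IsRay G r) (h0 : r 0 = u) (h1 : r 1 = v) :
    Cofinal (fun i => γ • r i) r :=
  boundary_mk_eq_iff.mp (hfix _ ⟨⟨r, hr⟩, rfl, r, hr, cofinal_refl r, 0, h0, h1⟩)

include hd

lemma IsRay.shift_add_eq (hT : G.IsTree) {r r' : ℕ → V} (hr : IsRay G r) (hr' : IsRay G r')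
    {m : ℕ} (hag : ∀ i ≤ m, r i = r' i) (hdiv : r (m + 1) ≠ r' (m + 1)) {γ : Γ}
    {k n k' n' : ℕ} (h : ∀ i, γ • r (i + k) = r (i + n))
    (h' : ∀ i, γ • r' (i + k') = r' (i + n')) : k + k' = n + n' := by
  have := hd γ (r (m + k)) (r' (m + k'))
  rw [h m, h' m, hr.dist_add_of_eqOn_of_ne hT hr' hag hdiv,
    hr.dist_add_of_eqOn_of_ne hT hr' hag hdiv] at this
  omega

variable (hT : G.IsTree) (hext : ∀ x y : V, ∃ z, G.Adj y z ∧ G.dist x z = G.dist x y + 1)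
  {u v : V} {γ : Γ}
include hT hext

lemma exists_fixed_tail (hbr : ∀ r, IsRay G r → ∀ M, ∃ a, M < a ∧ IsBranch G (r a))
    (hcof : ∀ r, IsRay G r → r 0 = u → r 1 = v → Cofinal (fun i => γ • r i) r)
    {r : ℕ → V} (hr : IsRay G r) (h0 : r 0 = u) (h1 : r 1 = v) :
    ∃ K, ∀ i, γ • r (i + K) = r (i + K) := by
  obtain ⟨_ | b, hb0, hb⟩ := hbr r hr 0
  · omega
  obtain ⟨_ | b', hbb', hb'br⟩ := hbr r hr (b + 1)
  · omega
  obtain ⟨z, hz, hzb, hzb'⟩ := hb.exists_adj_ne_ne (r b) (r (b + 2))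
  obtain ⟨z', hz', hzb₁, hzb₁'⟩ := hb'br.exists_adj_ne_ne (r b') (r (b' + 2))
  obtain ⟨s, hs, hsr, hsz⟩ := hr.exists_branch_off hext hT hz hzb
  obtain ⟨t, ht, htr, htz⟩ := hr.exists_branch_off hext hT hz' hzb₁
  have hcof' : ∀ {s}, IsRay G s → (∀ i ≤ b + 1, s i = r i) → Cofinal (fun i => γ • s i) s :=
    fun hs hsr => hcof _ hs ((hsr 0 (by omega)).trans h0) ((hsr 1 (by omega)).trans h1)
  obtain ⟨k₁, n₁, c₁⟩ := hcof r hr h0 h1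
  obtain ⟨k₂, n₂, c₂⟩ := hcof' hs hsr
  obtain ⟨k₃, n₃, c₃⟩ := hcof' ht fun i hi => htr i (by omega)
  -- `s` leaves `r` after `r (b + 1)` and `t` after `r (b' + 1)`, so the three rays pairwise
  -- diverge and their shifts cancel in pairs.
  have e₁₂ := hr.shift_add_eq hd hT hs (fun i hi => (hsr i hi).symm)
    (fun h => hzb' (hsz.symm.trans h.symm)) c₁ c₂
  have e₁₃ := hr.shift_add_eq hd hT ht (fun i hi => (htr i hi).symm)
    (fun h => hzb₁' (htz.symm.trans h.symm)) c₁ c₃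
  have e₂₃ := hs.shift_add_eq hd hT ht (fun i hi => (hsr i hi).trans (htr i (by omega)).symm)
    (fun h => hzb' (hsz.symm.trans (h.trans (htr _ (by omega))))) c₂ c₃
  exact ⟨k₁, fun i => (c₁ i).trans (congrArg r (by omega))⟩

lemma smul_eq_of_smul_succ_eq
    (htail : ∀ r, IsRay G r → r 0 = u → r 1 = v → ∃ K, ∀ i, γ • r (i + K) = r (i + K))
    {r : ℕ → V} (hr : IsRay G r) (h0 : r 0 = u) (h1 : r 1 = v) {j : ℕ}
    (hj : γ • r (j + 1) = r (j + 1)) : γ • r j = r j := by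
  by_contra hne
  obtain ⟨t, ht, htr, htz⟩ := hr.exists_branch_off hext hT (hj ▸ adj_smul hd γ (hr.adj j).symm) hne
  obtain ⟨K, hK⟩ := htail t ht ((htr 0 (by omega)).trans h0) ((htr 1 (by omega)).trans h1)
  -- the fixed vertex `t (j + 2 + K)` is at distance `K` from `t (j + 2) = γ • r j` but at
  -- distance `K + 2` from `t j = r j`
  have h₁ := ht (j + 2) K
  have h₂ := ht j (K + 2)
  have h₃ := hd γ (r j) (t (j + 2 + K))
  rw [htz] at h₁
  rw [hK, h₁, ← htr j (by omega), show j + 2 + K = j + (K + 2) by ring, h₂] at h₃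
  omega

lemma smul_eq_of_fixed_tails
    (htail : ∀ r, IsRay G r → r 0 = u → r 1 = v → ∃ K, ∀ i, γ • r (i + K) = r (i + K))
    {r : ℕ → V} (hr : IsRay G r) (h0 : r 0 = u) (h1 : r 1 = v) (j : ℕ) : γ • r j = r j := by
  obtain ⟨K, hK⟩ := htail r hr h0 h1
  suffices h : ∀ n j, K ≤ j + n → γ • r j = r j from h K j (by omega)
  intro n
  induction n with
  | zero =>
    intro j hj
    rw [← Nat.sub_add_cancel (show K ≤ j by omega)]
    exact hK (j - K)
  | succ n ih => exact fun j hj =>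
      smul_eq_of_smul_succ_eq hd hT hext htail hr h0 h1 (ih (j + 1) (by omega))

end Fixing

lemma fixes_Z0_of_fixes_ZB (hT : G.IsTree)
    (hd : ∀ (g : Γ) (u v : V), G.dist (g • u) (g • v) = G.dist u v)
    (hmin : ∀ S : Set V, S.Nonempty → (∀ (g : Γ), ∀ v ∈ S, g • v ∈ S) →
      (G.induce S).Connected → S = Set.univ)
    (hgen : ∃ g₁ g₂ : Γ, Hyperbolic G g₁ ∧ Hyperbolic G g₂ ∧
      ∀ r : ℕ → V, IsRay G r → Cofinal (fun i => g₁ • r i) r →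
        ¬ Cofinal (fun i => g₂ • r i) r)
    {u v : V} (he : G.Adj u v) {γ : Γ} (hfix : ∀ x ∈ ZB G u v, bAct G hd γ x = x) :
    ∀ w ∈ Z0 G u v, γ • w = w := by
  have h2 := exists_two_adj hT hd hmin he (hgen.imp fun _ ⟨_, hg₁, _⟩ => hg₁)
  have hext := hT.exists_adj_dist_eq_add_one h2
  have hbetween := exists_isBranch_between hT hd hmin (exists_isBranch hT hd h2 hgen)
  have htail : ∀ r, IsRay G r → r 0 = u → r 1 = v → ∃ K, ∀ i, γ • r (i + K) = r (i + K) :=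
    fun _ hr => exists_fixed_tail hd hT hext (fun _ hr => hr.exists_isBranch_gt hT hbetween)
      (fun _ hr h0 h1 => cofinal_of_fixes_ZB hd hfix hr h0 h1) hr
  intro w hw
  obtain ⟨r, hr, h0, h1, j, rfl⟩ := exists_isRay_of_mem_Z0 hext hT he hw
  exact smul_eq_of_fixed_tails hd hT hext htail hr h0 h1 j

end Action

end TreeStmt

theorem stmt_18_general {V Γ : Type*} [Group Γ] [MulAction Γ V] (G : SimpleGraph V)
    (hT : G.IsTree)
    (hd : ∀ (g : Γ) (u v : V), G.dist (g • u) (g • v) = G.dist u v)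
    (hmin : ∀ S : Set V, S.Nonempty → (∀ (g : Γ), ∀ v ∈ S, g • v ∈ S) →
      (G.induce S).Connected → S = Set.univ)
    (hgen : ∃ g₁ g₂ : Γ, Hyperbolic G g₁ ∧ Hyperbolic G g₂ ∧
      ∀ r : ℕ → V, IsRay G r → Cofinal (fun i => g₁ • r i) r →
        ¬ Cofinal (fun i => g₂ • r i) r)
    (u v : V) (he : G.Adj u v) (g : Γ)
    (hfix : ∀ x ∈ ZB G u v, bAct G hd g x = x) :
    (∀ x ∈ Z G u v, extAct G hd g x = x) ∧
    {γ : Γ | ∀ w ∈ Z0 G u v, γ • w = w} = {γ : Γ | ∀ x ∈ ZB G u v, bAct G hd γ x = x} ∧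
    {γ : Γ | ∀ w ∈ Z0 G u v, γ • w = w} =
      {γ : Γ | ∀ x ∈ Z G u v ∩
          (@closure (Ext G) (shadowTopology G) (Set.range (Sum.inr : Boundary G → Ext G))),
        extAct G hd γ x = x} := by
  have key : ∀ γ : Γ, (∀ w ∈ Z0 G u v, γ • w = w) ↔ ∀ x ∈ ZB G u v, bAct G hd γ x = x :=
    fun γ => ⟨fixes_ZB_of_fixes_Z0 hd, fixes_Z0_of_fixes_ZB hT hd hmin hgen he⟩
  refine ⟨(fixes_Z_iff hd).mpr ⟨(key g).mpr hfix, hfix⟩, Set.ext key, Set.ext fun γ => ?_⟩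
  refine ⟨fun h x hx => (fixes_Z_iff hd).mpr ⟨h, (key γ).mp h⟩ x hx.1, fun h => ?_⟩
  refine (key γ).mpr fun x hx => Sum.inr_injective (h _ ⟨Or.inr ⟨x, hx, rfl⟩, ?_⟩)
  exact @subset_closure (Ext G) (shadowTopology G) _ _ (Set.mem_range_self x)

/-- Let a group `Γ` act by automorphisms on a tree `T`, minimally and of
general type (two transverse hyperbolic elements). If `g ∈ Γ` fixes the boundary shadow
`Z_B(e)` of an edge `e = (u, v)` pointwise, then `g` fixes the whole extended shadow
`Z(e)` pointwise. Consequently the fixator subgroups of `Z_0(e)`, `Z_B(e)` and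
`Z(e) ∩ closure(∂T)` coincide. -/
theorem stmt_18 {V Γ : Type*} [Group Γ] [MulAction Γ V] (G : SimpleGraph V)
    (hT : G.IsTree)
    (hadj : ∀ (g : Γ) (u v : V), G.Adj u v → G.Adj (g • u) (g • v))
    (hd : ∀ (g : Γ) (u v : V), G.dist (g • u) (g • v) = G.dist u v)
    (hmin : ∀ S : Set V, S.Nonempty → (∀ (g : Γ), ∀ v ∈ S, g • v ∈ S) →
      (G.induce S).Connected → S = Set.univ)
    (hgen : ∃ g₁ g₂ : Γ, Hyperbolic G g₁ ∧ Hyperbolic G g₂ ∧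
      ∀ r : ℕ → V, IsRay G r → Cofinal (fun i => g₁ • r i) r →
        ¬ Cofinal (fun i => g₂ • r i) r)
    (u v : V) (he : G.Adj u v) (g : Γ)
    (hfix : ∀ x ∈ ZB G u v, bAct G hd g x = x) :
    (∀ x ∈ Z G u v, extAct G hd g x = x) ∧
    {γ : Γ | ∀ w ∈ Z0 G u v, γ • w = w} = {γ : Γ | ∀ x ∈ ZB G u v, bAct G hd γ x = x} ∧
    {γ : Γ | ∀ w ∈ Z0 G u v, γ • w = w} =
      {γ : Γ | ∀ x ∈ Z G u v ∩
          (@closure (Ext G) (shadowTopology G) (Set.range (Sum.inr : Boundary G → Ext G))),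
        extAct G hd γ x = x} :=
  stmt_18_general G hT hd hmin hgen u v he g hfix
end
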